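/- Let G be a graph, let C be a cut-set of G, and write G − C = H_1 ∪ ⋯ ∪ H_m where each H_i is a connected component of G − C. Then γ_P(G) ≤ ∑_{i=1}^m γ_P(H_i) + |C|; indeed, if B_i is a power dominating set of H_i for each i, then C ∪ ⋃_{i=1}^m B_i is a power dominating set of G. -/

import Mathlib

/-!
Take a power dominating set `B_i` of each component `H_i` and add the whole cut-set `C`.
Every vertex of `C` is observed at once, and a vertex of `H_i` has no neighbours outside
`H_i ∪ C`, so each forcing step of the process in `H_i` remains a forcing step in `G`:
the neighbours it ignores lie in `C` and are already observed.
-/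

open SimpleGraph

/-- The set of vertices eventually observed in the power domination process started
from `S`: first the closed neighborhood of `S` is observed (domination step), then
repeatedly any vertex that is the unique unobserved neighbor of an observed vertex
becomes observed (propagation step). -/
inductive PDObserved {V : Type*} (G : SimpleGraph V) (S : Set V) : V → Prop
  | init (v : V) (hv : v ∈ S) : PDObserved G S v
  | dom (u v : V) (hu : u ∈ S) (h : G.Adj u v) : PDObserved G S v
  | force (u v : V) (hu : PDObserved G S u) (h : G.Adj u v)
      (hall : ∀ w, G.Adj u w → w ≠ v → PDObserved G S w) : PDObserved G S v

/-- `S` is a power dominating set of `G` if every vertex is eventually observed. -/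
def IsPowerDominatingSet {V : Type*} (G : SimpleGraph V) (S : Set V) : Prop :=
  ∀ v, PDObserved G S v

/-- The power domination number: the minimum cardinality of a power dominating set. -/
noncomputable def powerDominationNumber {V : Type*} (G : SimpleGraph V) : ℕ :=
  sInf {n | ∃ S : Set V, S.ncard = n ∧ IsPowerDominatingSet G S}

/-- A family `π` indexed by a type with at least two elements is a failed power
dominating partition of `G` if it is a partition of `V(G)` into nonempty parts and
for each part `π i`, the complement `V(G) - π i` is not a power dominating set. -/
def IsFailedPDPartition {V : Type*} (G : SimpleGraph V) {ι : Type*} (π : ι → Set V) : Prop :=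
  2 ≤ Nat.card ι ∧ (∀ i, (π i).Nonempty) ∧ Pairwise (Function.onFun Disjoint π) ∧
    (⋃ i, π i) = Set.univ ∧ ∀ i, ¬ IsPowerDominatingSet G ((π i)ᶜ)

/-- `ℓ_G`: the maximum `k` such that `G` has a failed power dominating partition into
`k` parts, or `1` if no failed power dominating partition exists. -/
noncomputable def ellPD {V : Type*} (G : SimpleGraph V) : ℕ :=
  sSup ({1} ∪ {k | ∃ π : Fin k → Set V, IsFailedPDPartition G π})

section

variable {V : Type*} {G : SimpleGraph V}

theorem PDObserved.of_induce {A : Set V} {B : Set A} {S : Set V}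
    (hB : Subtype.val '' B ⊆ S) (hboundary : ∀ u : A, ∀ w ∉ A, G.Adj u w → PDObserved G S w)
    {v : A} (hv : PDObserved (G.induce A) B v) : PDObserved G S v := by
  induction hv with
  | init v hv => exact .init _ (hB ⟨v, hv, rfl⟩)
  | dom u v hu huv => exact .dom _ _ (hB ⟨u, hu, rfl⟩) huv
  | force u v _ huv _ ihu ihall =>
    refine .force _ _ ihu huv fun w huw hwv => ?_
    by_cases hwA : w ∈ A
    · exact ihall ⟨w, hwA⟩ huw fun h => hwv (congrArg Subtype.val h)
    · exact hboundary u w hwA huw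

theorem IsPowerDominatingSet.union_iUnion_of_separated {ι : Type*} {C : Set V} {Hs : ι → Set V}
    (hcover : Cᶜ ⊆ ⋃ i, Hs i) (hsep : ∀ i j, i ≠ j → ∀ u ∈ Hs i, ∀ v ∈ Hs j, ¬ G.Adj u v)
    {B : (i : ι) → Set (Hs i)} (hB : ∀ i, IsPowerDominatingSet (G.induce (Hs i)) (B i)) :
    IsPowerDominatingSet G (C ∪ ⋃ i, Subtype.val '' B i) := by
  intro v
  by_cases hvC : v ∈ C
  · exact .init v (.inl hvC)
  obtain ⟨i, hvi⟩ := Set.mem_iUnion.mp (hcover hvC)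
  refine PDObserved.of_induce (A := Hs i) ?_ ?_ (hB i ⟨v, hvi⟩)
  · exact fun x hx => .inr (Set.mem_iUnion.mpr ⟨i, hx⟩)
  · intro u w hwi huw
    refine .init w (.inl (not_not.mp fun hwC => ?_))
    obtain ⟨j, hwj⟩ := Set.mem_iUnion.mp (hcover hwC)
    exact hsep i j (fun hij => hwi (hij ▸ hwj)) u u.2 w hwj huw

theorem powerDominationNumber_le_ncard {S : Set V} (hS : IsPowerDominatingSet G S) :
    powerDominationNumber G ≤ S.ncard :=
  Nat.sInf_le ⟨S, rfl, hS⟩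

theorem exists_isPowerDominatingSet_ncard_eq (G : SimpleGraph V) :
    ∃ S : Set V, S.ncard = powerDominationNumber G ∧ IsPowerDominatingSet G S :=
  Nat.sInf_mem (s := {n | ∃ S : Set V, S.ncard = n ∧ IsPowerDominatingSet G S})
    ⟨_, Set.univ, rfl, fun v => .init v trivial⟩

end

theorem cutset_upper_bound_general {V : Type*} (G : SimpleGraph V) (C : Set V)
    (m : ℕ) (Hs : Fin m → Set V)
    (hcover : (⋃ i, Hs i) = Cᶜ)
    (hsep : ∀ i j, i ≠ j → ∀ u ∈ Hs i, ∀ v ∈ Hs j, ¬ G.Adj u v) :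
    powerDominationNumber G ≤ (∑ i, powerDominationNumber (G.induce (Hs i))) + C.ncard ∧
    ∀ B : (i : Fin m) → Set (Hs i),
      (∀ i, IsPowerDominatingSet (G.induce (Hs i)) (B i)) →
      IsPowerDominatingSet G (C ∪ ⋃ i, Subtype.val '' B i) := by
  have hunion := fun B => IsPowerDominatingSet.union_iUnion_of_separated hcover.ge hsep (B := B)
  refine ⟨?_, hunion⟩
  choose B hBcard hB using fun i => exists_isPowerDominatingSet_ncard_eq (G.induce (Hs i))
  calc powerDominationNumber G
      ≤ (C ∪ ⋃ i, Subtype.val '' B i).ncard := powerDominationNumber_le_ncard (hunion B hB)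
    _ ≤ C.ncard + ∑ i, (Subtype.val '' B i).ncard :=
        (Set.ncard_union_le _ _).trans (Nat.add_le_add_left (Set.ncard_iUnion_le_of_fintype _) _)
    _ = (∑ i, powerDominationNumber (G.induce (Hs i))) + C.ncard := by
        simp only [Set.ncard_image_of_injective _ Subtype.val_injective, hBcard, add_comm]

/-- Let `G` be a graph, `C` a cut-set of `G`, and write
`G − C = H_1 ∪ ⋯ ∪ H_m` where each `H_i` is a connected component of `G − C` (given by
the vertex sets `Hs i`).  Then `γ_P(G) ≤ ∑_{i=1}^m γ_P(H_i) + |C|`; indeed, if `B_i` is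
a power dominating set of `H_i` for each `i`, then `C ∪ ⋃_{i=1}^m B_i` is a power
dominating set of `G`. -/
theorem cutset_upper_bound {V : Type*} [Fintype V] (G : SimpleGraph V) (C : Set V)
    (m : ℕ) (hm : 2 ≤ m) (Hs : Fin m → Set V)
    (hne : ∀ i, (Hs i).Nonempty)
    (hdisj : Pairwise (Function.onFun Disjoint Hs))
    (hcover : (⋃ i, Hs i) = Cᶜ)
    (hconn : ∀ i, (G.induce (Hs i)).Connected)
    (hsep : ∀ i j, i ≠ j → ∀ u ∈ Hs i, ∀ v ∈ Hs j, ¬ G.Adj u v) :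
    powerDominationNumber G ≤ (∑ i, powerDominationNumber (G.induce (Hs i))) + C.ncard ∧
    ∀ B : (i : Fin m) → Set (Hs i),
      (∀ i, IsPowerDominatingSet (G.induce (Hs i)) (B i)) →
      IsPowerDominatingSet G (C ∪ ⋃ i, Subtype.val '' B i) :=
  cutset_upper_bound_general G C m Hs hcover hsep
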